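/- arXiv:1711.05427 — 3 statements merged into one kernel-verified Lean document; each statement's English description precedes it below -/
import Mathlib

section
/- If 0 ≤ μ ≤ 1, 1 ≤ b ≤ 1/μ (with b arbitrary ≥ 1 when μ = 0) and t ∈ [−1,1], then (1 − μb²)² ≤ 1 + μ²b⁴ − 2μ²b² + 2μb²(μt² + t√((1−μ²) + μ²t²)) ≤ (1 + μb²)². -/
theorem stmt6 (μ b t : ℝ) (hμ0 : 0 ≤ μ) (hμ1 : μ ≤ 1) (hb : 1 ≤ b) (hμb : μ * b ≤ 1)
    (ht0 : -1 ≤ t) (ht1 : t ≤ 1) :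
    (1 - μ * b ^ 2) ^ 2 ≤
      1 + μ ^ 2 * b ^ 4 - 2 * μ ^ 2 * b ^ 2 +
        2 * μ * b ^ 2 * (μ * t ^ 2 + t * Real.sqrt ((1 - μ ^ 2) + μ ^ 2 * t ^ 2)) ∧
    1 + μ ^ 2 * b ^ 4 - 2 * μ ^ 2 * b ^ 2 +
        2 * μ * b ^ 2 * (μ * t ^ 2 + t * Real.sqrt ((1 - μ ^ 2) + μ ^ 2 * t ^ 2)) ≤
      (1 + μ * b ^ 2) ^ 2 := by
  set S := Real.sqrt ((1 - μ ^ 2) + μ ^ 2 * t ^ 2) with hS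
  have harg : (0:ℝ) ≤ (1 - μ ^ 2) + μ ^ 2 * t ^ 2 := by nlinarith [sq_nonneg t, sq_nonneg μ]
  have hS0 : 0 ≤ S := Real.sqrt_nonneg _
  have hS2 : S ^ 2 = (1 - μ ^ 2) + μ ^ 2 * t ^ 2 := Real.sq_sqrt harg
  have ht2 : t ^ 2 ≤ 1 := by nlinarith
  have hb2 : 0 ≤ μ * b ^ 2 := by positivity
  have key1 : -1 ≤ μ * (t ^ 2 - 1) + t * S := by
    nlinarith [sq_nonneg (t + S), sq_nonneg (1 - μ), sq_nonneg (t*S + (1 - μ*(1-t^2))),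
      mul_nonneg hμ0 (sq_nonneg (1 - t^2))]
  have key2 : μ * (t ^ 2 - 1) + t * S ≤ 1 := by
    nlinarith [sq_nonneg (t - S), sq_nonneg (1 - μ), sq_nonneg (t*S - (1 - μ*(1-t^2))),
      mul_nonneg hμ0 (sq_nonneg (1 - t^2))]
  constructor <;> nlinarith [mul_le_mul_of_nonneg_left key2 hb2,
    mul_le_mul_of_nonneg_left key1 hb2, sq_nonneg (μ*b^2)]
end

section
/- The map (μ, b) ↦ (λ, R) := (√((1−μ²b²)(b²−1)), 1 + μb²) is a bijection from M = {(μ,b) : 0 ≤ μ, 1 ≤ b, μb ≤ 1} onto L = {(λ, R) : 0 ≤ λ < ∞, 1 ≤ R < ∞}, with inverse μ = (√(λ²+R²) − √(λ²+(R−2)²))/(√(λ²+R²) + √(λ²+(R−2)²)) and b = (√(λ²+R²) + √(λ²+(R−2)²))/2. -/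
private lemma keyM {μ b : ℝ} (hμ : 0 ≤ μ) (hb : 1 ≤ b) (hμb : μ * b ≤ 1) :
    Real.sqrt (Real.sqrt ((1 - μ ^ 2 * b ^ 2) * (b ^ 2 - 1)) ^ 2 + (1 + μ * b ^ 2) ^ 2)
      = b * (1 + μ) ∧
    Real.sqrt (Real.sqrt ((1 - μ ^ 2 * b ^ 2) * (b ^ 2 - 1)) ^ 2 + (1 + μ * b ^ 2 - 2) ^ 2)
      = b * (1 - μ) := by
  have hμ1 : μ ≤ 1 := by nlinarith
  have h0 : 0 ≤ μ * b := mul_nonneg hμ (by linarith)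
  have hA : μ ^ 2 * b ^ 2 ≤ 1 := by nlinarith [mul_le_mul hμb hμb h0 zero_le_one]
  have harg : 0 ≤ (1 - μ ^ 2 * b ^ 2) * (b ^ 2 - 1) :=
    mul_nonneg (by linarith) (by nlinarith)
  rw [Real.sq_sqrt harg]
  constructor
  · have h : (1 - μ ^ 2 * b ^ 2) * (b ^ 2 - 1) + (1 + μ * b ^ 2) ^ 2 = (b * (1 + μ)) ^ 2 := by
      ring
    rw [h, Real.sqrt_sq (by nlinarith)]
  · have h : (1 - μ ^ 2 * b ^ 2) * (b ^ 2 - 1) + (1 + μ * b ^ 2 - 2) ^ 2 = (b * (1 - μ)) ^ 2 := by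
      ring
    rw [h, Real.sqrt_sq (by nlinarith)]

private lemma keyL {l R s t : ℝ} (hl : 0 ≤ l) (hR : 1 ≤ R)
    (hs : s = Real.sqrt (l ^ 2 + R ^ 2)) (ht : t = Real.sqrt (l ^ 2 + (R - 2) ^ 2)) :
    (0 ≤ (s - t) / (s + t) ∧ 1 ≤ (s + t) / 2 ∧ (s - t) / (s + t) * ((s + t) / 2) ≤ 1) ∧
    Real.sqrt ((1 - ((s - t) / (s + t)) ^ 2 * ((s + t) / 2) ^ 2) * (((s + t) / 2) ^ 2 - 1)) = l ∧
    1 + (s - t) / (s + t) * ((s + t) / 2) ^ 2 = R := by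
  have hs0 : 0 ≤ s := hs ▸ Real.sqrt_nonneg _
  have ht0 : 0 ≤ t := ht ▸ Real.sqrt_nonneg _
  have hs2 : s ^ 2 = l ^ 2 + R ^ 2 := by rw [hs]; exact Real.sq_sqrt (by positivity)
  have ht2 : t ^ 2 = l ^ 2 + (R - 2) ^ 2 := by rw [ht]; exact Real.sq_sqrt (by positivity)
  have hsR : R ≤ s := by nlinarith [sq_nonneg l]
  have htR : 2 - R ≤ t := by nlinarith [sq_nonneg l]
  have hts : t ≤ s := by nlinarith
  have hst2 : s - t ≤ 2 := by nlinarith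
  have hstpos : 0 < s + t := by linarith
  have hstne : s + t ≠ 0 := ne_of_gt hstpos
  refine ⟨⟨div_nonneg (by linarith) (le_of_lt hstpos), by linarith, ?_⟩, ?_, ?_⟩
  · have h : (s - t) / (s + t) * ((s + t) / 2) = (s - t) / 2 := by field_simp
    rw [h]; linarith
  · have hm2 : ((s - t) / (s + t)) ^ 2 * ((s + t) / 2) ^ 2 = ((s - t) / 2) ^ 2 := by
      field_simp
    rw [hm2]
    have key : (1 - ((s - t) / 2) ^ 2) * (((s + t) / 2) ^ 2 - 1) = l ^ 2 := by
      linear_combination ((2 * t ^ 2 - s ^ 2 - (l ^ 2 + R ^ 2) + 8) / 16) * hs2 +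
        ((2 * (l ^ 2 + R ^ 2) - t ^ 2 - (l ^ 2 + (R - 2) ^ 2) + 8) / 16) * ht2
    rw [key, Real.sqrt_sq hl]
  · have h : (s - t) / (s + t) * ((s + t) / 2) ^ 2 = (s ^ 2 - t ^ 2) / 4 := by
      field_simp; ring
    rw [h]
    linear_combination hs2 / 4 - ht2 / 4

theorem stmt8 :
    Set.BijOn
      (fun p : ℝ × ℝ =>
        (Real.sqrt ((1 - p.1 ^ 2 * p.2 ^ 2) * (p.2 ^ 2 - 1)), 1 + p.1 * p.2 ^ 2))
      {p : ℝ × ℝ | 0 ≤ p.1 ∧ 1 ≤ p.2 ∧ p.1 * p.2 ≤ 1}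
      {q : ℝ × ℝ | 0 ≤ q.1 ∧ 1 ≤ q.2} ∧
    ∀ l R : ℝ, 0 ≤ l → 1 ≤ R →
      (fun μ b =>
        (0 ≤ μ ∧ 1 ≤ b ∧ μ * b ≤ 1) ∧
        Real.sqrt ((1 - μ ^ 2 * b ^ 2) * (b ^ 2 - 1)) = l ∧ 1 + μ * b ^ 2 = R)
      ((Real.sqrt (l ^ 2 + R ^ 2) - Real.sqrt (l ^ 2 + (R - 2) ^ 2)) /
        (Real.sqrt (l ^ 2 + R ^ 2) + Real.sqrt (l ^ 2 + (R - 2) ^ 2)))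
      ((Real.sqrt (l ^ 2 + R ^ 2) + Real.sqrt (l ^ 2 + (R - 2) ^ 2)) / 2) := by
  constructor
  · refine ⟨?_, ?_, ?_⟩
    · rintro ⟨μ, b⟩ ⟨hμ, hb, hμb⟩
      replace hμ : (0:ℝ) ≤ μ := hμ
      replace hb : (1:ℝ) ≤ b := hb
      refine ⟨Real.sqrt_nonneg _, ?_⟩
      show (1:ℝ) ≤ 1 + μ * b ^ 2
      nlinarith [sq_nonneg b]
    · rintro ⟨μ1, b1⟩ ⟨hμ1, hb1, hμb1⟩ ⟨μ2, b2⟩ ⟨hμ2, hb2, hμb2⟩ heq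
      simp only [Prod.mk.injEq] at heq
      obtain ⟨e1, e2⟩ := keyM hμ1 hb1 hμb1
      obtain ⟨f1, f2⟩ := keyM hμ2 hb2 hμb2
      rw [heq.1, heq.2] at e1 e2
      have g1 : b1 * (1 + μ1) = b2 * (1 + μ2) := by rw [← e1, f1]
      have g2 : b1 * (1 - μ1) = b2 * (1 - μ2) := by rw [← e2, f2]
      have hbb : b1 = b2 := by nlinarith
      subst hbb
      have hb0 : b1 ≠ 0 := by positivity
      have : (1 : ℝ) + μ1 = 1 + μ2 := mul_left_cancel₀ hb0 g1
      have hμμ : μ1 = μ2 := by linarith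
      simp [hμμ]
    · rintro ⟨l, R⟩ ⟨hl, hR⟩
      replace hl : (0:ℝ) ≤ l := hl
      replace hR : (1:ℝ) ≤ R := hR
      obtain ⟨hmem, he1, he2⟩ :=
        keyL (s := Real.sqrt (l ^ 2 + R ^ 2)) (t := Real.sqrt (l ^ 2 + (R - 2) ^ 2)) hl hR rfl rfl
      refine ⟨(_, _), hmem, ?_⟩
      simp only [Prod.mk.injEq]
      exact ⟨he1, he2⟩
  · intro l R hl hR
    exact keyL (s := Real.sqrt (l ^ 2 + R ^ 2)) (t := Real.sqrt (l ^ 2 + (R - 2) ^ 2)) hl hR rfl rfl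
end

section
/- Let X : ℝ → ℂ and γ : ℝ → ℝ be smooth with |X(u)|² + γ(u)² = 1 for all u. If X' + Xγ = 0 and γ' = 1 − γ², then either (X, γ) is constantly (0, ±1), or, up to a translation of u and multiplication of X by a unimodular constant, X(u) = 1/cosh(u) and γ(u) = tanh(u). -/
open Real

lemma zero_of_deriv_eq_mul {F a : ℝ → ℝ} (ha : Continuous a)
    (h : ∀ u, HasDerivAt F (a u * F u) u) (h0 : F 0 = 0) : ∀ u, F u = 0 := by
  set A : ℝ → ℝ := fun u => ∫ t in (0:ℝ)..u, a t with hA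
  have hA' : ∀ u, HasDerivAt A (a u) u := fun u =>
    intervalIntegral.integral_hasDerivAt_right (ha.intervalIntegrable _ _)
      (ha.stronglyMeasurableAtFilter _ _) ha.continuousAt
  have hG' : ∀ u, HasDerivAt (fun u => F u * Real.exp (-A u)) 0 u := by
    intro u
    have h2 : HasDerivAt (fun u => Real.exp (-A u)) (Real.exp (-A u) * (-a u)) u :=
      ((hA' u).neg).exp
    have := (h u).fun_mul h2
    refine this.congr_deriv (Eq.symm ?_)
    ring
  have hconst : ∀ u, F u * Real.exp (-A u) = F 0 * Real.exp (-A 0) := fun u =>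
    is_const_of_deriv_eq_zero (fun v => (hG' v).differentiableAt)
      (fun v => (hG' v).deriv) u 0
  intro u
  have := hconst u
  rw [h0, zero_mul] at this
  have hexp : Real.exp (-A u) ≠ 0 := Real.exp_ne_zero _
  exact (mul_eq_zero.1 this).resolve_right hexp

theorem stmt13 (X : ℝ → ℂ) (γ : ℝ → ℝ) (hX : ContDiff ℝ (⊤ : ℕ∞) X) (hγ : ContDiff ℝ (⊤ : ℕ∞) γ)
    (hnorm : ∀ u, ‖X u‖ ^ 2 + γ u ^ 2 = 1)
    (hode1 : ∀ u, deriv X u + X u * (γ u : ℂ) = 0)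
    (hode2 : ∀ u, deriv γ u = 1 - γ u ^ 2) :
    (∀ u, X u = 0 ∧ γ u = 1) ∨ (∀ u, X u = 0 ∧ γ u = -1) ∨
    ∃ c₁ c₂ : ℝ, ∀ u, X u = Complex.exp (Complex.I * (c₂ : ℂ)) * ((1 / Real.cosh (u + c₁) : ℝ) : ℂ) ∧
      γ u = Real.tanh (u + c₁) := by
  have hXd : Differentiable ℝ X := hX.differentiable (by simp)
  have hγd : Differentiable ℝ γ := hγ.differentiable (by simp)
  have hγc : Continuous γ := hγ.continuous
  have hγ' : ∀ u, HasDerivAt γ (1 - γ u ^ 2) u := fun u => hode2 u ▸ (hγd u).hasDerivAt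
  have hX' : ∀ u, HasDerivAt X (-(X u * (γ u : ℂ))) u := by
    intro u
    have hd : deriv X u = -(X u * (γ u : ℂ)) := by linear_combination hode1 u
    exact hd ▸ (hXd u).hasDerivAt
  have hXzero : ∀ u, γ u ^ 2 = 1 → X u = 0 := by
    intro u hu
    have h := hnorm u
    rw [hu] at h
    have : ‖X u‖ ^ 2 = 0 := by linarith
    have : ‖X u‖ = 0 := by
      nlinarith [norm_nonneg (X u)]
    exact norm_eq_zero.1 this
  by_cases h1 : γ 0 = 1
  · left
    have hγ1 : ∀ u, γ u - 1 = 0 := by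
      apply zero_of_deriv_eq_mul (a := fun u => -(1 + γ u))
      · exact (continuous_const.add hγc).neg
      · intro u
        have := (hγ' u).sub_const 1
        refine this.congr_deriv (Eq.symm ?_)
        ring
      · rw [sub_eq_zero]; exact h1
    intro u
    have hg : γ u = 1 := by linarith [hγ1 u]
    exact ⟨hXzero u (by rw [hg]; norm_num), hg⟩
  by_cases h2 : γ 0 = -1
  · right; left
    have hγ1 : ∀ u, γ u + 1 = 0 := by
      apply zero_of_deriv_eq_mul (a := fun u => 1 - γ u)
      · exact continuous_const.sub hγc
      · intro u
        have := (hγ' u).add_const 1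
        refine this.congr_deriv (Eq.symm ?_)
        ring
      · rw [h2]; ring
    intro u
    have hg : γ u = -1 := by linarith [hγ1 u]
    exact ⟨hXzero u (by rw [hg]; norm_num), hg⟩
  · right; right
    have hle : γ 0 ^ 2 ≤ 1 := by nlinarith [hnorm 0, sq_nonneg (‖X 0‖)]
    have hlt : γ 0 ^ 2 < 1 := by
      rcases lt_or_eq_of_le hle with h | h
      · exact h
      · exfalso
        have : (γ 0 - 1) * (γ 0 + 1) = 0 := by nlinarith
        rcases mul_eq_zero.1 this with h | h
        · exact h1 (by linarith)
        · exact h2 (by linarith)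
    have hpos : 0 < 1 - γ 0 ^ 2 := by linarith
    set s : ℝ := γ 0 / Real.sqrt (1 - γ 0 ^ 2) with hs
    set c₁ : ℝ := Real.arsinh s with hc₁
    have hsq : Real.sqrt (1 - γ 0 ^ 2) > 0 := Real.sqrt_pos.2 hpos
    have hs2 : s ^ 2 = γ 0 ^ 2 / (1 - γ 0 ^ 2) := by
      rw [hs, div_pow, Real.sq_sqrt hpos.le]
    have h1s : 1 + s ^ 2 = 1 / (1 - γ 0 ^ 2) := by
      rw [hs2]; field_simp; ring
    have hcosh : Real.cosh c₁ = 1 / Real.sqrt (1 - γ 0 ^ 2) := by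
      rw [hc₁, Real.cosh_arsinh, h1s, one_div, Real.sqrt_inv, one_div]
    have key0 : γ 0 * Real.cosh c₁ = Real.sinh c₁ := by
      rw [hcosh, hc₁, Real.sinh_arsinh, hs]
      field_simp
    -- F = γ cosh - sinh vanishes
    have hF0 : ∀ u, γ u * Real.cosh (u + c₁) - Real.sinh (u + c₁) = 0 := by
      apply zero_of_deriv_eq_mul (a := fun u => -γ u) hγc.neg
      · intro u
        have hc : HasDerivAt (fun u => Real.cosh (u + c₁)) (Real.sinh (u + c₁)) u := by
          exact ((Real.hasDerivAt_cosh (u + c₁)).comp u ((hasDerivAt_id u).add_const c₁)).congr_deriv (mul_one _)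
        have hsh : HasDerivAt (fun u => Real.sinh (u + c₁)) (Real.cosh (u + c₁)) u := by
          exact ((Real.hasDerivAt_sinh (u + c₁)).comp u ((hasDerivAt_id u).add_const c₁)).congr_deriv (mul_one _)
        have := ((hγ' u).fun_mul hc).sub hsh
        refine this.congr_deriv (Eq.symm ?_)
        ring
      · rw [zero_add, sub_eq_zero]; exact key0
    have hcoshpos : ∀ u : ℝ, 0 < Real.cosh u := Real.cosh_pos
    have htanh : ∀ u, γ u = Real.tanh (u + c₁) := by
      intro u
      have h := hF0 u
      rw [Real.tanh_eq_sinh_div_cosh, eq_div_iff (hcoshpos (u + c₁)).ne']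
      linarith
    -- Y = X * cosh is constant
    have hY' : ∀ u, HasDerivAt (fun u => X u * (Real.cosh (u + c₁) : ℂ)) 0 u := by
      intro u
      have hc : HasDerivAt (fun u => Real.cosh (u + c₁)) (Real.sinh (u + c₁)) u := by
        exact ((Real.hasDerivAt_cosh (u + c₁)).comp u ((hasDerivAt_id u).add_const c₁)).congr_deriv (mul_one _)
      have hcC : HasDerivAt (fun u => ((Real.cosh (u + c₁) : ℝ) : ℂ))
          ((Real.sinh (u + c₁) : ℝ) : ℂ) u := hc.ofReal_comp
      have := (hX' u).fun_mul hcC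
      refine this.congr_deriv (Eq.symm ?_)
      have hcast : (γ u : ℂ) * (Real.cosh (u + c₁) : ℂ) = (Real.sinh (u + c₁) : ℂ) := by
        have := hF0 u
        push_cast
        exact_mod_cast congrArg (fun x : ℝ => (x : ℂ)) (by linarith : γ u * Real.cosh (u + c₁) = Real.sinh (u + c₁))
      linear_combination (X u) * hcast
    have hYconst : ∀ u, X u * (Real.cosh (u + c₁) : ℂ) = X 0 * (Real.cosh (0 + c₁) : ℂ) :=
      fun u => is_const_of_deriv_eq_zero (fun v => (hY' v).differentiableAt)
        (fun v => (hY' v).deriv) u 0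
    set Y0 : ℂ := X 0 * (Real.cosh (0 + c₁) : ℂ) with hY0def
    have habs : ‖Y0‖ = 1 := by
      have hx0 : ‖X 0‖ ^ 2 = 1 - γ 0 ^ 2 := by linarith [hnorm 0]
      have hg0 : γ 0 * Real.cosh c₁ = Real.sinh c₁ := key0
      have hcs : Real.cosh c₁ ^ 2 - Real.sinh c₁ ^ 2 = 1 := Real.cosh_sq_sub_sinh_sq c₁
      have hcsq : Real.cosh c₁ ^ 2 = 1 / (1 - γ 0 ^ 2) := by
        rw [hcosh, div_pow, one_pow, Real.sq_sqrt hpos.le]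
      have habs2 : ‖Y0‖ ^ 2 = 1 := by
        rw [hY0def, norm_mul, Complex.norm_real, Real.norm_eq_abs, zero_add,
          abs_of_pos (hcoshpos c₁), mul_pow, hx0, hcsq]
        field_simp
      nlinarith [norm_nonneg Y0]
    set c₂ : ℝ := Complex.arg Y0 with hc₂
    have hY0 : Y0 = Complex.exp (Complex.I * (c₂ : ℂ)) := by
      conv_lhs => rw [← Complex.norm_mul_exp_arg_mul_I Y0]
      rw [habs, Complex.ofReal_one, one_mul, mul_comm]
    refine ⟨c₁, c₂, fun u => ⟨?_, htanh u⟩⟩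
    have hne : ((Real.cosh (u + c₁) : ℝ) : ℂ) ≠ 0 := by
      exact_mod_cast (hcoshpos (u + c₁)).ne'
    have hXu : X u * (Real.cosh (u + c₁) : ℂ) = Complex.exp (Complex.I * (c₂ : ℂ)) :=
      (hYconst u).trans hY0
    have hXeq : X u = Complex.exp (Complex.I * (c₂ : ℂ)) / ((Real.cosh (u + c₁) : ℝ) : ℂ) := by
      rw [eq_div_iff hne]; exact hXu
    rw [hXeq]
    push_cast
    ring
end
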